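/- Let 0 < w1 < w2 be integers. Every four-point multiset in ℤ² with multi-width (w1, w2) admitting a dual vector u1 with width_{u1}(S) = w1 and u1·S affine equivalent to {0,0,0,w1} is affine equivalent to a multiset of the form {(0,0), (0,y0), (0,w2), (w1,y1)}, and every such listed multiset (with 0 ≤ y0 ≤ w2/2, 0 ≤ y1 < w1) has multi-width exactly (w1, w2); in particular every dual vector u = (a, b) ∈ (ℤ²)* with b ≠ 0 satisfies width_u({(0,0), (0,y0), (0,w2), (w1,y1)}) ≥ w2. -/

import Mathlib

open scoped Pointwise

noncomputable section

/-- Embed an integer lattice point into real space. -/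
def intEmbed {d : ℕ} (v : Fin d → ℤ) : Fin d → ℝ := fun i => (v i : ℝ)

/-- Pairing of an integer dual vector with a real point. -/
def dualPair {d : ℕ} (u : Fin d → ℤ) (x : Fin d → ℝ) : ℝ := ∑ i, (u i : ℝ) * x i

/-- The width of a set `P ⊆ ℝ^d` with respect to an integer dual vector `u`:
`max_{x ∈ P} u·x − min_{x ∈ P} u·x`. -/
def widthIn {d : ℕ} (u : Fin d → ℤ) (P : Set (Fin d → ℝ)) : ℝ :=
  sSup (dualPair u '' P) - sInf (dualPair u '' P)

/-- `w` is a tuple of widths of `P` realized by linearly independent dual vectors. -/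
def IsWidthTuple {d : ℕ} (P : Set (Fin d → ℝ)) (w : Fin d → ℝ) : Prop :=
  ∃ u : Fin d → (Fin d → ℤ), LinearIndependent ℤ u ∧ ∀ i, widthIn (u i) P = w i

/-- `w` is the multi-width of `P`: the lexicographically minimal width tuple over
linearly independent tuples of dual vectors. -/
def IsMultiWidth {d : ℕ} (P : Set (Fin d → ℝ)) (w : Fin d → ℝ) : Prop :=
  IsWidthTuple P w ∧ ∀ w' : Fin d → ℝ, IsWidthTuple P w' → toLex w ≤ toLex w'

/-- The affine map `x ↦ A x + b` on real points, with integral `A` and `b`. -/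
def unimodMap {d : ℕ} (A : Matrix (Fin d) (Fin d) ℤ) (b : Fin d → ℤ) (x : Fin d → ℝ) :
    Fin d → ℝ :=
  fun i => (∑ j, (A i j : ℝ) * x j) + (b i : ℝ)

/-- Affine unimodular equivalence of subsets of `ℝ^d`: `Q = A·P + b` with `A ∈ GL_d(ℤ)`,
`b ∈ ℤ^d`. -/
def AffEquiv {d : ℕ} (P Q : Set (Fin d → ℝ)) : Prop :=
  ∃ A : Matrix (Fin d) (Fin d) ℤ, IsUnit A.det ∧ ∃ b : Fin d → ℤ, Q = unimodMap A b '' P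

/-- A lattice polytope: the convex hull of finitely many lattice points. -/
def IsLatticePolytope {d : ℕ} (P : Set (Fin d → ℝ)) : Prop :=
  ∃ V : Finset (Fin d → ℤ), V.Nonempty ∧ P = convexHull ℝ (intEmbed '' (V : Set (Fin d → ℤ)))

/-- A lattice tetrahedron: the convex hull of 4 affinely independent lattice points in `ℝ³`. -/
def IsLatticeTetrahedron (P : Set (Fin 3 → ℝ)) : Prop :=
  ∃ v : Fin 4 → (Fin 3 → ℤ), AffineIndependent ℝ (fun i => intEmbed (v i)) ∧
    P = convexHull ℝ (Set.range fun i => intEmbed (v i))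

/-- The type of affine equivalence classes of lattice tetrahedra with multi-width `w`. -/
def TetClasses (w : Fin 3 → ℝ) : Type :=
  Quot fun P Q : {P : Set (Fin 3 → ℝ) // IsLatticeTetrahedron P ∧ IsMultiWidth P w} =>
    AffEquiv P.1 Q.1

/-- The real points of a multiset of lattice points. -/
def msetPts {d : ℕ} (S : Multiset (Fin d → ℤ)) : Set (Fin d → ℝ) :=
  intEmbed '' {v | v ∈ S}

/-- The convex hull of a multiset of lattice points. -/
def msetHull {d : ℕ} (S : Multiset (Fin d → ℤ)) : Set (Fin d → ℝ) :=
  convexHull ℝ (msetPts S)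

/-- Affine unimodular equivalence of multisets of lattice points. -/
def MsetEquiv {d : ℕ} (S T : Multiset (Fin d → ℤ)) : Prop :=
  ∃ A : Matrix (Fin d) (Fin d) ℤ, IsUnit A.det ∧ ∃ b : Fin d → ℤ,
    S.map (fun v => A.mulVec v + b) = T

/-- Affine unimodular equivalence of multisets of integers (`d = 1`). -/
def MsetEquivZ (S T : Multiset ℤ) : Prop :=
  ∃ a : ℤ, IsUnit a ∧ ∃ b : ℤ, S.map (fun x => a * x + b) = T

/-- The width of a multiset of integers (the width of its convex hull). -/
def widthZ (S : Multiset ℤ) : ℝ :=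
  sSup ((fun n : ℤ => (n : ℝ)) '' {n | n ∈ S}) - sInf ((fun n : ℤ => (n : ℝ)) '' {n | n ∈ S})

/-- `S` has a dual vector `u` of width `w1` whose image multiset `u·S` is affine
equivalent in `ℤ` to the multiset `L`. -/
def HasLineType (w1 : ℤ) (L : Multiset ℤ) (S : Multiset (Fin 2 → ℤ)) : Prop :=
  ∃ u : Fin 2 → ℤ, widthIn u (msetHull S) = (w1 : ℝ) ∧
    MsetEquivZ (S.map fun v => ∑ i, u i * v i) L


/-!
Since `u₁·S ∼ {0,0,0,w₁}` and `w₁` is the first multi-width, `u₁` is primitive: if `u₁ = g u` with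
`g ≥ 2`, then `u` would have width `w₁ / g < w₁`. So a unimodular map sends `u₁` to the first
coordinate, putting three points of `S` on the line `x = 0` and one on `x = w₁`. A shear
`(x, y) ↦ (x, y + m x)` and a translation then move the lone point to a height `0 ≤ y₁ < w₁` and
the lowest of the other three to `(0, 0)`. Let `h` be the top height on `x = 0`. The direction
`(0, 1)` has width `max h y₁`, which is at least `w₁ > y₁`, so this width is `h`; as `(1, 0)` has
width `w₁`, lexicographic minimality gives `h ≥ w₂`. Conversely, a direction `(a, b)` with `b ≠ 0`
has width at least `|b| h ≥ h`, and a linearly independent pair realizing `(w₁, w₂)` contains such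
a direction, so `h ≤ w₂`. The same two bounds, width `≥ w₂` if `b ≠ 0` and `≥ |a| w₁` otherwise,
give the multi-width of the normal forms.
-/

open Matrix

theorem toLex_le_toLex_of_fin_two {α : Type*} [LinearOrder α] {x y : Fin 2 → α}
    (h0 : x 0 ≤ y 0) (h1 : x 0 = y 0 → x 1 ≤ y 1) : toLex x ≤ toLex y := by
  rcases h0.lt_or_eq with h0 | h0
  · exact (show toLex x < toLex y from ⟨0, fun j hj => absurd hj (Fin.not_lt_zero j), h0⟩).le
  rcases (h1 h0).lt_or_eq with h1 | h1
  · refine (show toLex x < toLex y from ⟨1, fun j hj => ?_, h1⟩).le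
    rwa [show j = 0 by omega]
  · exact (congrArg toLex (funext fun i => by fin_cases i <;> assumption)).le

theorem linearIndependent_fin_two_iff (u : Fin 2 → Fin 2 → ℤ) :
    LinearIndependent ℤ u ↔ u 0 0 * u 1 1 - u 0 1 * u 1 0 ≠ 0 := by
  have := (linearIndependent_row_iff (A := of u)).trans nonsingular_iff_det_ne_zero
  rwa [det_fin_two] at this

theorem linearIndependent_vecMul_iff {n : Type*} [Fintype n] [DecidableEq n]
    {u : n → n → ℤ} {A : Matrix n n ℤ} (hA : IsUnit A.det) :
    LinearIndependent ℤ (fun i => u i ᵥ* A) ↔ LinearIndependent ℤ u := by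
  have hrow : (fun i => u i ᵥ* A) = (of u * A).row := by
    ext i j; simp [mul_apply, vecMul, dotProduct]
  rw [hrow, linearIndependent_row_iff, nonsingular_iff_det_ne_zero, det_mul]
  refine Iff.trans ?_ (linearIndependent_row_iff (A := of u)).symm
  rw [nonsingular_iff_det_ne_zero]
  exact ⟨fun h h0 => h (by rw [h0, zero_mul]), fun h => mul_ne_zero h hA.ne_zero⟩

theorem dualPair_intEmbed {d : ℕ} (u v : Fin d → ℤ) :
    dualPair u (intEmbed v) = ((u ⬝ᵥ v : ℤ) : ℝ) := by
  simp [dualPair, intEmbed, dotProduct]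

theorem isLinearMap_dualPair {d : ℕ} (u : Fin d → ℤ) : IsLinearMap ℝ (dualPair u) where
  map_add x y := by simp [dualPair, mul_add, Finset.sum_add_distrib]
  map_smul c x := by simp [dualPair, Finset.mul_sum, mul_left_comm]

theorem continuous_dualPair {d : ℕ} (u : Fin d → ℤ) : Continuous (dualPair u) := by
  unfold dualPair; fun_prop

section MultisetHull

variable {d : ℕ} {S : Multiset (Fin d → ℤ)} {u : Fin d → ℤ}

theorem isCompact_msetHull (S : Multiset (Fin d → ℤ)) : IsCompact (msetHull S) :=
  (S.finite_toSet.image intEmbed).isCompact_convexHull ℝ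

theorem intEmbed_mem_msetHull {v : Fin d → ℤ} (hv : v ∈ S) : intEmbed v ∈ msetHull S :=
  subset_convexHull ℝ _ ⟨v, hv, rfl⟩

theorem sub_le_widthIn {p q : Fin d → ℤ} (hp : p ∈ S) (hq : q ∈ S) :
    ((u ⬝ᵥ p - u ⬝ᵥ q : ℤ) : ℝ) ≤ widthIn u (msetHull S) := by
  have hK := (isCompact_msetHull S).image (continuous_dualPair u)
  have hp' := Set.mem_image_of_mem (dualPair u) (intEmbed_mem_msetHull hp)
  have hq' := Set.mem_image_of_mem (dualPair u) (intEmbed_mem_msetHull hq)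
  rw [dualPair_intEmbed] at hp' hq'
  push_cast
  exact sub_le_sub (le_csSup hK.bddAbove hp') (csInf_le hK.bddBelow hq')

theorem abs_sub_le_widthIn {p q : Fin d → ℤ} (u : Fin d → ℤ) (hp : p ∈ S) (hq : q ∈ S) :
    ((|u ⬝ᵥ p - u ⬝ᵥ q| : ℤ) : ℝ) ≤ widthIn u (msetHull S) := by
  rcases abs_cases (u ⬝ᵥ p - u ⬝ᵥ q) with ⟨h, -⟩ | ⟨h, -⟩
  · rw [h]; exact sub_le_widthIn hp hq
  · rw [h, neg_sub]; exact sub_le_widthIn hq hp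

theorem widthIn_le {m M : ℤ} (hS : S ≠ 0) (h : ∀ v ∈ S, u ⬝ᵥ v ∈ Set.Icc m M) :
    widthIn u (msetHull S) ≤ ((M - m : ℤ) : ℝ) := by
  obtain ⟨v, hv⟩ := Multiset.exists_mem_of_ne_zero hS
  have hne : (dualPair u '' msetHull S).Nonempty := ⟨_, _, intEmbed_mem_msetHull hv, rfl⟩
  have hsub : msetHull S ⊆ {x | dualPair u x ∈ Set.Icc (m : ℝ) M} := by
    refine convexHull_min ?_ ((convex_halfSpace_ge (isLinearMap_dualPair u) _).inter
      (convex_halfSpace_le (isLinearMap_dualPair u) _))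
    rintro _ ⟨v, hv, rfl⟩
    have := h v hv
    simp only [Set.mem_ofPred_eq, dualPair_intEmbed, Set.mem_Icc] at this ⊢
    exact_mod_cast this
  push_cast
  refine sub_le_sub (csSup_le hne ?_) (le_csInf hne ?_)
  · rintro _ ⟨x, hx, rfl⟩; exact (hsub hx).2
  · rintro _ ⟨x, hx, rfl⟩; exact (hsub hx).1

theorem widthIn_eq {p q : Fin d → ℤ} (hp : p ∈ S) (hq : q ∈ S)
    (h : ∀ v ∈ S, u ⬝ᵥ v ∈ Set.Icc (u ⬝ᵥ q) (u ⬝ᵥ p)) :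
    widthIn u (msetHull S) = ((u ⬝ᵥ p - u ⬝ᵥ q : ℤ) : ℝ) :=
  (widthIn_le (fun h0 => by simp [h0] at hp) h).antisymm (sub_le_widthIn hp hq)

theorem exists_extremal_dotProduct (hS : S ≠ 0) (u : Fin d → ℤ) :
    ∃ p ∈ S, ∃ q ∈ S, ∀ v ∈ S, u ⬝ᵥ v ∈ Set.Icc (u ⬝ᵥ q) (u ⬝ᵥ p) := by
  have hne : S.toFinset.Nonempty := Multiset.toFinset_nonempty.mpr hS
  obtain ⟨p, hp, hpmax⟩ := S.toFinset.exists_max_image (u ⬝ᵥ ·) hne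
  obtain ⟨q, hq, hqmin⟩ := S.toFinset.exists_min_image (u ⬝ᵥ ·) hne
  refine ⟨p, by simpa using hp, q, by simpa using hq, fun v hv => ?_⟩
  exact ⟨hqmin v (by simpa using hv), hpmax v (by simpa using hv)⟩

end MultisetHull

theorem widthIn_smul {d : ℕ} (c : ℤ) (u : Fin d → ℤ) (P : Set (Fin d → ℝ)) :
    widthIn (c • u) P = |c| * widthIn u P := by
  have himage : dualPair (c • u) '' P = (c : ℝ) • (dualPair u '' P) := by
    rw [← Set.image_smul, Set.image_image]
    congr 1; funext x
    simp [dualPair, Finset.mul_sum, mul_assoc]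
  unfold widthIn
  rw [himage]
  rcases le_total 0 c with hc | hc
  · have hc' : (0 : ℝ) ≤ c := by exact_mod_cast hc
    rw [Real.sSup_smul_of_nonneg hc', Real.sInf_smul_of_nonneg hc', abs_of_nonneg hc]
    simp [mul_sub]
  · have hc' : (c : ℝ) ≤ 0 := by exact_mod_cast hc
    rw [Real.sSup_smul_of_nonpos hc', Real.sInf_smul_of_nonpos hc', abs_of_nonpos hc]
    simp; ring

theorem widthIn_msetHull_map {d : ℕ} (A : Matrix (Fin d) (Fin d) ℤ) (b u : Fin d → ℤ)
    (S : Multiset (Fin d → ℤ)) :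
    widthIn u (msetHull (S.map fun v => A *ᵥ v + b)) = widthIn (u ᵥ* A) (msetHull S) := by
  rcases eq_or_ne S 0 with rfl | hS
  · simp [widthIn, msetHull, msetPts]
  obtain ⟨p, hp, q, hq, hpq⟩ := exists_extremal_dotProduct hS (u ᵥ* A)
  have hdot : ∀ v, u ⬝ᵥ (A *ᵥ v + b) = u ᵥ* A ⬝ᵥ v + u ⬝ᵥ b := fun v => by
    rw [dotProduct_add, dotProduct_mulVec]
  rw [widthIn_eq hp hq hpq,
    widthIn_eq (Multiset.mem_map_of_mem _ hp) (Multiset.mem_map_of_mem _ hq)]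
  · rw [hdot, hdot]; ring_nf
  · simp only [Multiset.mem_map, forall_exists_index, and_imp]
    rintro _ v hv rfl
    simp only [hdot, Set.mem_Icc, add_le_add_iff_right]
    exact hpq v hv

theorem MsetEquiv.trans {d : ℕ} {S T U : Multiset (Fin d → ℤ)} (hST : MsetEquiv S T)
    (hTU : MsetEquiv T U) : MsetEquiv S U := by
  obtain ⟨A, hA, b, rfl⟩ := hST
  obtain ⟨B, hB, c, rfl⟩ := hTU
  refine ⟨B * A, by rw [det_mul]; exact hB.mul hA, B *ᵥ b + c, ?_⟩
  rw [Multiset.map_map]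
  congr 1; funext v
  simp [mulVec_add, mulVec_mulVec, add_assoc]

theorem MsetEquiv.isWidthTuple_iff {d : ℕ} {S T : Multiset (Fin d → ℤ)} {w : Fin d → ℝ}
    (h : MsetEquiv S T) : IsWidthTuple (msetHull T) w ↔ IsWidthTuple (msetHull S) w := by
  obtain ⟨A, hA, b, rfl⟩ := h
  constructor
  · rintro ⟨u, hu, hw⟩
    exact ⟨fun i => u i ᵥ* A, (linearIndependent_vecMul_iff hA).mpr hu,
      fun i => by rw [← hw i, widthIn_msetHull_map]⟩
  · rintro ⟨u, hu, hw⟩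
    refine ⟨fun i => u i ᵥ* A⁻¹,
      (linearIndependent_vecMul_iff (isUnit_nonsing_inv_det A hA)).mpr hu, fun i => ?_⟩
    rw [widthIn_msetHull_map, vecMul_vecMul, nonsing_inv_mul A hA, vecMul_one, hw i]

theorem MsetEquiv.isMultiWidth_iff {d : ℕ} {S T : Multiset (Fin d → ℤ)} {w : Fin d → ℝ}
    (h : MsetEquiv S T) : IsMultiWidth (msetHull T) w ↔ IsMultiWidth (msetHull S) w := by
  simp only [IsMultiWidth, h.isWidthTuple_iff]

theorem sub_le_widthIn_of_vertical {S : Multiset (Fin 2 → ℤ)} {u : Fin 2 → ℤ} {x t t' : ℤ}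
    (hu : u 1 ≠ 0) (hp : ![x, t] ∈ S) (hq : ![x, t'] ∈ S) :
    ((t - t' : ℤ) : ℝ) ≤ widthIn u (msetHull S) := by
  refine le_trans ?_ (abs_sub_le_widthIn u hp hq)
  have hdot : u ⬝ᵥ ![x, t] - u ⬝ᵥ ![x, t'] = u 1 * (t - t') := by
    simp [dotProduct, Fin.sum_univ_two]; ring
  rw [hdot, abs_mul]
  exact_mod_cast (le_abs_self _).trans (le_mul_of_one_le_left (abs_nonneg _) (Int.one_le_abs hu))

namespace IsMultiWidth

variable {P : Set (Fin 2 → ℝ)} {w : Fin 2 → ℝ}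

theorem fst_le_widthIn (h : IsMultiWidth P w) {u : Fin 2 → ℤ} (hu : u ≠ 0) :
    w 0 ≤ widthIn u P := by
  have hli : LinearIndependent ℤ ![u, ![-u 1, u 0]] := by
    rw [linearIndependent_fin_two_iff]
    have : u 0 ≠ 0 ∨ u 1 ≠ 0 := by
      by_contra! h0; exact hu (funext fun i => by fin_cases i <;> simp [h0.1, h0.2])
    simp only [cons_val_zero, cons_val_one]
    have : 0 < u 0 * u 0 - u 1 * -u 1 := by
      rcases this with h0 | h0 <;> nlinarith [mul_self_pos.2 h0, mul_self_nonneg (u 0),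
        mul_self_nonneg (u 1)]
    exact this.ne'
  have := h.2 ![widthIn u P, widthIn ![-u 1, u 0] P]
    ⟨_, hli, fun i => by fin_cases i <;> rfl⟩
  simpa using Pi.apply_le_of_toLex this (i := 0) (by simp)

theorem snd_le_widthIn (h : IsMultiWidth P w) {u v : Fin 2 → ℤ}
    (huv : LinearIndependent ℤ ![u, v]) (hu : widthIn u P = w 0) : w 1 ≤ widthIn v P := by
  have := h.2 ![widthIn u P, widthIn v P] ⟨_, huv, fun i => by fin_cases i <;> rfl⟩
  simpa using Pi.apply_le_of_toLex this (i := 1) (fun j hj => by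
    rw [show j = 0 by omega]; simp [hu])

theorem le_snd (h : IsMultiWidth P w) {M : ℝ} (hM : ∀ u : Fin 2 → ℤ, u 1 ≠ 0 → M ≤ widthIn u P)
    (hlt : w 0 < M) : M ≤ w 1 := by
  obtain ⟨u, hu, hw⟩ := h.1
  rw [linearIndependent_fin_two_iff] at hu
  by_cases h1 : u 1 1 = 0
  · have h0 : u 0 1 ≠ 0 := fun h0 => hu (by simp [h0, h1])
    exact absurd (hw 0 ▸ hM _ h0) hlt.not_ge
  · exact hw 1 ▸ hM _ h1

theorem isCoprime (h : IsMultiWidth P w) (hpos : 0 < w 0) {r : Fin 2 → ℤ}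
    (hr : widthIn r P = w 0) : IsCoprime (r 0) (r 1) := by
  have hr0 : r ≠ 0 := by
    rintro rfl
    have := widthIn_smul 0 (0 : Fin 2 → ℤ) P
    rw [zero_smul, hr] at this
    simp only [abs_zero, Int.cast_zero, zero_mul] at this
    exact hpos.ne' this
  obtain ⟨a, ha⟩ := Int.gcd_dvd_left (a := r 0) (b := r 1)
  obtain ⟨b, hb⟩ := Int.gcd_dvd_right (a := r 0) (b := r 1)
  set g : ℤ := (Int.gcd (r 0) (r 1) : ℤ)
  have hg : 0 < g := by
    have : r 0 ≠ 0 ∨ r 1 ≠ 0 := by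
      by_contra! h0; exact hr0 (funext fun i => by fin_cases i <;> simp [h0.1, h0.2])
    exact Int.natCast_pos.mpr (Int.gcd_pos_iff.mpr this)
  have hr' : r = g • ![a, b] := funext fun i => by fin_cases i <;> simp [← ha, ← hb]
  have hab : ![a, b] ≠ 0 := by
    rintro h0; exact hr0 (by rw [hr', h0, smul_zero])
  have hle := h.fst_le_widthIn hab
  rw [hr', widthIn_smul, abs_of_pos hg] at hr
  have : (g : ℝ) ≤ 1 := by nlinarith
  rw [Int.isCoprime_iff_gcd_eq_one]
  have : g ≤ 1 := by exact_mod_cast this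
  omega

end IsMultiWidth

theorem isMultiWidth_of_le_widthIn {P : Set (Fin 2 → ℝ)} {w1 w2 : ℝ}
    (h10 : widthIn ![1, 0] P = w1) (h01 : widthIn ![0, 1] P = w2)
    (hfst : ∀ u : Fin 2 → ℤ, u ≠ 0 → w1 ≤ widthIn u P)
    (hsnd : ∀ u : Fin 2 → ℤ, u 1 ≠ 0 → w2 ≤ widthIn u P) : IsMultiWidth P ![w1, w2] := by
  refine ⟨⟨![![1, 0], ![0, 1]], ?_, fun i => by fin_cases i <;> assumption⟩, ?_⟩
  · rw [linearIndependent_fin_two_iff]; simp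
  rintro w' ⟨u, hu, hw⟩
  obtain rfl : w' = fun i => widthIn (u i) P := funext fun i => (hw i).symm
  have hu0 := hu.ne_zero 0
  have hu1 := hu.ne_zero 1
  rw [linearIndependent_fin_two_iff] at hu
  refine toLex_le_toLex_of_fin_two (hfst _ hu0) fun heq => ?_
  by_cases h1 : u 1 1 = 0
  · have h0 : u 0 1 ≠ 0 := fun h0 => hu (by simp [h0, h1])
    simp only [cons_val_zero, cons_val_one] at heq ⊢
    linarith [hsnd _ h0, hfst _ hu1]
  · simpa using hsnd _ h1

def normalForm (w1 w2 y0 y1 : ℤ) : Multiset (Fin 2 → ℤ) :=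
  {![0, 0], ![0, y0], ![0, w2], ![w1, y1]}

section NormalForm

variable {w1 w2 y0 y1 : ℤ}

theorem le_widthIn_normalForm {u : Fin 2 → ℤ} (hu : u 1 ≠ 0) :
    (w2 : ℝ) ≤ widthIn u (msetHull (normalForm w1 w2 y0 y1)) := by
  simpa using sub_le_widthIn_of_vertical (x := 0) (t := w2) (t' := 0) hu
    (by simp [normalForm]) (by simp [normalForm])

theorem isMultiWidth_normalForm (h0 : 0 ≤ w1) (h12 : w1 ≤ w2) (hy0 : y0 ∈ Set.Icc 0 w2)
    (hy1 : y1 ∈ Set.Icc 0 w2) :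
    IsMultiWidth (msetHull (normalForm w1 w2 y0 y1)) ![(w1 : ℝ), (w2 : ℝ)] := by
  have hp : ![w1, y1] ∈ normalForm w1 w2 y0 y1 := by simp [normalForm]
  have hq : ![0, 0] ∈ normalForm w1 w2 y0 y1 := by simp [normalForm]
  refine isMultiWidth_of_le_widthIn ?_ ?_ (fun u hu => ?_)
    (fun u hu => le_widthIn_normalForm hu)
  · rw [widthIn_eq hp hq] <;> simp [normalForm, dotProduct, Fin.sum_univ_two, h0]
  · rw [widthIn_eq (p := ![0, w2]) (by simp [normalForm]) hq] <;>
      simp [normalForm, dotProduct, Fin.sum_univ_two, hy0.1, hy0.2, hy1.1, hy1.2,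
        hy0.1.trans hy0.2]
  by_cases h1 : u 1 = 0
  · have h0' : u 0 ≠ 0 := fun h0' => hu (funext fun i => by fin_cases i <;> simpa)
    refine le_trans ?_ (abs_sub_le_widthIn u hp hq)
    have hdot : u ⬝ᵥ ![w1, y1] - u ⬝ᵥ ![0, 0] = u 0 * w1 := by
      simp [dotProduct, Fin.sum_univ_two, h1]
    rw [hdot, abs_mul, abs_of_nonneg h0]
    exact_mod_cast le_mul_of_one_le_left h0 (Int.one_le_abs h0')
  · exact (Int.cast_le.mpr h12).trans (le_widthIn_normalForm h1)

end NormalForm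

theorem HasLineType.exists_msetEquiv {S : Multiset (Fin 2 → ℤ)} {w : Fin 2 → ℝ} {k : ℤ}
    {L : Multiset ℤ} (hL : HasLineType k L S) (hMW : IsMultiWidth (msetHull S) w)
    (hk : (k : ℝ) = w 0) (hpos : 0 < w 0) : ∃ T, MsetEquiv S T ∧ T.map (· 0) = L := by
  obtain ⟨u, hu, a, ha, c, hmap⟩ := hL
  have hr : widthIn (a • u) (msetHull S) = w 0 := by
    rw [widthIn_smul, Int.isUnit_iff_abs_eq.mp ha, hu, hk]; simp
  obtain ⟨x, y, hxy⟩ := hMW.isCoprime hpos hr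
  refine ⟨S.map fun v => !![a * u 0, a * u 1; -y, x] *ᵥ v + ![c, 0], ⟨_, ?_, _, rfl⟩, ?_⟩
  · rw [det_fin_two_of, show a * u 0 * x - a * u 1 * -y = 1 by simp at hxy; linear_combination hxy]
    exact isUnit_one
  · rw [Multiset.map_map, ← hmap, Multiset.map_map]
    congr 1; funext v
    simp [dotProduct, Fin.sum_univ_two]; ring

theorem exists_eq_cons_map_of_map_apply_zero_eq {T : Multiset (Fin 2 → ℤ)} {k : ℤ}
    (hT : T.map (· 0) = {0, 0, 0, k}) :
    ∃ β Q, Multiset.card Q = 3 ∧ T = ![k, β] ::ₘ Q.map (![0, ·]) := by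
  obtain ⟨p, hp, hpk⟩ := Multiset.mem_map.mp (hT ▸ (by simp : k ∈ ({0, 0, 0, k} : Multiset ℤ)))
  have hrest : (T.erase p).map (· 0) = {0, 0, 0} := by
    rw [← Multiset.cons_erase hp, Multiset.map_cons, hpk] at hT
    refine (Multiset.cons_inj_right k).mp (hT.trans ?_)
    simp only [Multiset.insert_eq_cons, ← Multiset.singleton_add, add_comm, add_left_comm]
  have hcard : Multiset.card (T.erase p) = 3 := by simpa using congrArg Multiset.card hrest
  refine ⟨p 1, (T.erase p).map (· 1), by simpa using hcard, ?_⟩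
  rw [Multiset.map_map]
  conv_lhs => rw [← Multiset.cons_erase hp]
  congr 1
  · exact funext fun i => by fin_cases i <;> simp [hpk]
  · refine (Multiset.map_congr rfl fun v hv => ?_).trans (Multiset.map_id _) |>.symm
    have : v 0 = 0 := by
      have := Multiset.mem_map_of_mem (· 0) hv
      rw [hrest] at this
      simpa using this
    exact funext fun i => by fin_cases i <;> simp [this]

theorem exists_msetEquiv_shear {k : ℤ} (hk : 0 < k) (β : ℤ) {Q : Multiset ℤ} (hQ : Q ≠ 0) :
    ∃ s Q', s ∈ Set.Ico 0 k ∧ 0 ∈ Q' ∧ (∀ t ∈ Q', 0 ≤ t) ∧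
      Multiset.card Q' = Multiset.card Q ∧
      MsetEquiv (![k, β] ::ₘ Q.map (![0, ·])) (![k, s] ::ₘ Q'.map (![0, ·])) := by
  obtain ⟨μ, hμ, hmin⟩ := Q.toFinset.exists_min_image id (Multiset.toFinset_nonempty.mpr hQ)
  rw [Multiset.mem_toFinset] at hμ
  refine ⟨(β - μ) % k, Q.map (· - μ), ⟨Int.emod_nonneg _ hk.ne', Int.emod_lt_of_pos _ hk⟩,
    Multiset.mem_map.mpr ⟨μ, hμ, sub_self μ⟩, ?_, Multiset.card_map _ _, ?_⟩
  · simp only [Multiset.mem_map, forall_exists_index, and_imp]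
    rintro _ t ht rfl
    exact sub_nonneg.mpr (hmin t (Multiset.mem_toFinset.mpr ht))
  refine ⟨!![1, 0; -((β - μ) / k), 1], by simp [det_fin_two_of], ![0, -μ], ?_⟩
  have hdiv := Int.mul_ediv_add_emod (β - μ) k
  simp only [Multiset.map_cons, Multiset.map_map]
  congr 1
  · funext i; fin_cases i
    · simp
    · simp; linear_combination -hdiv
  · congr 1; funext t i; fin_cases i
    · simp
    · simp; ring

theorem dotProduct_mem_Icc_of_mem_cons_map {k s m M : ℤ} {Q : Multiset ℤ} {u : Fin 2 → ℤ}
    (hp : u 0 * k + u 1 * s ∈ Set.Icc m M) (hQ : ∀ t ∈ Q, u 1 * t ∈ Set.Icc m M) :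
    ∀ v ∈ ![k, s] ::ₘ Q.map (![0, ·]), u ⬝ᵥ v ∈ Set.Icc m M := by
  intro v hv
  rcases Multiset.mem_cons.mp hv with rfl | hv
  · simpa [dotProduct, Fin.sum_univ_two] using hp
  · obtain ⟨t, ht, rfl⟩ := Multiset.mem_map.mp hv
    simpa [dotProduct, Fin.sum_univ_two] using hQ t ht

theorem mem_of_isMultiWidth_cons_map {k w2 s : ℤ} {Q : Multiset ℤ} (hk : k < w2)
    (hs : s ∈ Set.Ico 0 k) (hQ0 : 0 ∈ Q) (hQ : ∀ t ∈ Q, 0 ≤ t)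
    (hMW : IsMultiWidth (msetHull (![k, s] ::ₘ Q.map (![0, ·]))) ![(k : ℝ), (w2 : ℝ)]) :
    w2 ∈ Q := by
  set S := ![k, s] ::ₘ Q.map (![0, ·])
  obtain ⟨M, hM, hmax⟩ := Q.toFinset.exists_max_image id ⟨0, Multiset.mem_toFinset.mpr hQ0⟩
  rw [Multiset.mem_toFinset] at hM
  replace hmax : ∀ t ∈ Q, t ≤ M := fun t ht => hmax t (Multiset.mem_toFinset.mpr ht)
  have hvert : ∀ {t}, t ∈ Q → ![0, t] ∈ S := fun ht =>
    Multiset.mem_cons_of_mem (Multiset.mem_map_of_mem _ ht)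
  have hk0 : 0 < k := hs.1.trans_lt hs.2
  have hkM : k ≤ M := by
    have hle := (hMW.fst_le_widthIn (u := ![0, 1]) (by simp)).trans
      (widthIn_le (u := ![0, 1]) Multiset.cons_ne_zero (dotProduct_mem_Icc_of_mem_cons_map
        (m := 0) (M := max s M) (by simp [hs.1]) (fun t ht => by simp [hQ t ht, hmax t ht])))
    have : k ≤ max s M := by simpa using hle
    exact (le_max_iff.mp this).resolve_left (not_le.mpr hs.2)
  have h10 : widthIn ![1, 0] (msetHull S) = k := by
    rw [widthIn_eq (Multiset.mem_cons_self _ _) (hvert hQ0) (dotProduct_mem_Icc_of_mem_cons_map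
      (by simp [hk0.le]) (fun t _ => by simp [hk0.le]))]
    simp [dotProduct, Fin.sum_univ_two]
  have h01 : widthIn ![0, 1] (msetHull S) = M := by
    rw [widthIn_eq (hvert hM) (hvert hQ0) (dotProduct_mem_Icc_of_mem_cons_map
      (by simp [hs.1, hs.2.le.trans hkM]) (fun t ht => by simp [hQ t ht, hmax t ht]))]
    simp [dotProduct, Fin.sum_univ_two]
  have hw2M : w2 ≤ M := by
    have := hMW.snd_le_widthIn (u := ![1, 0]) (v := ![0, 1])
      (by rw [linearIndependent_fin_two_iff]; simp) (by simpa using h10)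
    simpa [h01] using this
  have hMw2 : M ≤ w2 := by
    have := hMW.le_snd (M := M)
      (fun u hu => by simpa using sub_le_widthIn_of_vertical hu (hvert hM) (hvert hQ0))
      (by simpa using hk.trans_le hw2M)
    simpa using this
  rwa [← le_antisymm hMw2 hw2M]

theorem exists_eq_of_card_eq_three_of_mem {α : Type*} [DecidableEq α] {Q : Multiset α} {a b : α}
    (hQ : Multiset.card Q = 3) (ha : a ∈ Q) (hb : b ∈ Q) (hab : a ≠ b) : ∃ c, Q = {a, c, b} := by
  have hb' : b ∈ Q.erase a := Multiset.mem_erase_of_ne hab.symm |>.mpr hb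
  obtain ⟨c, hc⟩ : ∃ c, (Q.erase a).erase b = {c} := by
    apply Multiset.card_eq_one.mp
    rw [Multiset.card_erase_of_mem hb', Multiset.card_erase_of_mem ha, hQ]; rfl
  refine ⟨c, ?_⟩
  rw [← Multiset.cons_erase ha, ← Multiset.cons_erase hb', hc]
  exact congrArg (a ::ₘ ·) (Multiset.cons_swap b c 0)

theorem normalForm_eq_cons (w1 w2 y0 y1 : ℤ) :
    normalForm w1 w2 y0 y1 = ![w1, y1] ::ₘ ({0, y0, w2} : Multiset ℤ).map (![0, ·]) := by
  simp [normalForm, Multiset.cons_swap ![w1, y1], Multiset.pair_comm ![0, w2]]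

theorem exists_msetEquiv_normalForm {w1 w2 : ℤ} (h0 : 0 < w1) (h12 : w1 < w2)
    {S : Multiset (Fin 2 → ℤ)} (hMW : IsMultiWidth (msetHull S) ![(w1 : ℝ), (w2 : ℝ)])
    (hL : HasLineType w1 {0, 0, 0, w1} S) : ∃ y0 y1, MsetEquiv S (normalForm w1 w2 y0 y1) := by
  obtain ⟨T, hST, hT⟩ := hL.exists_msetEquiv hMW rfl (by simpa using h0)
  obtain ⟨β, Q, hQ, rfl⟩ := exists_eq_cons_map_of_map_apply_zero_eq hT
  have hQ0 : Q ≠ 0 := Multiset.card_pos.mp (by omega)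
  obtain ⟨s, Q', hs, hQ'0, hQ'nonneg, hQ'card, hTT'⟩ := exists_msetEquiv_shear h0 β hQ0
  have hSQ' := hST.trans hTT'
  have hw2 := mem_of_isMultiWidth_cons_map h12 hs hQ'0 hQ'nonneg (hSQ'.isMultiWidth_iff.mpr hMW)
  obtain ⟨y0, rfl⟩ := exists_eq_of_card_eq_three_of_mem (hQ'card.trans hQ) hQ'0 hw2 (by omega)
  exact ⟨y0, s, by rwa [normalForm_eq_cons]⟩

/-- Every four-point multiset in `ℤ²` of multi-width `(w₁, w₂)` (`0 < w₁ < w₂`)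
admitting a dual vector `u₁` of width `w₁` with `u₁·S ∼ {0,0,0,w₁}` is affine
equivalent to some `{(0,0), (0,y₀), (0,w₂), (w₁,y₁)}`; moreover every such listed
multiset with `0 ≤ y₀ ≤ w₂/2` and `0 ≤ y₁ < w₁` has multi-width exactly `(w₁, w₂)`,
and in particular has width at least `w₂` in every direction `(a, b)` with `b ≠ 0`. -/
theorem four_point_sets_type0001_form (w1 w2 : ℤ) (h0 : 0 < w1) (h12 : w1 < w2) :
    (∀ S : Multiset (Fin 2 → ℤ), Multiset.card S = 4 →
        IsMultiWidth (msetHull S) ![(w1 : ℝ), (w2 : ℝ)] →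
        HasLineType w1 ({0, 0, 0, w1} : Multiset ℤ) S →
        ∃ y0 y1 : ℤ,
          MsetEquiv S ({![0, 0], ![0, y0], ![0, w2], ![w1, y1]} : Multiset (Fin 2 → ℤ))) ∧
    (∀ y0 y1 : ℤ, 0 ≤ y0 → 2 * y0 ≤ w2 → 0 ≤ y1 → y1 < w1 →
        IsMultiWidth
          (msetHull ({![0, 0], ![0, y0], ![0, w2], ![w1, y1]} : Multiset (Fin 2 → ℤ)))
          ![(w1 : ℝ), (w2 : ℝ)] ∧
        ∀ a b : ℤ, b ≠ 0 →
          (w2 : ℝ) ≤ widthIn ![a, b]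
            (msetHull ({![0, 0], ![0, y0], ![0, w2], ![w1, y1]} :
              Multiset (Fin 2 → ℤ)))) := by
  refine ⟨fun S _ hMW hL => exists_msetEquiv_normalForm h0 h12 hMW hL, ?_⟩
  intro y0 y1 hy0 hy0' hy1 hy1'
  exact ⟨isMultiWidth_normalForm h0.le h12.le ⟨hy0, by omega⟩ ⟨hy1, by omega⟩,
    fun a b hb => le_widthIn_normalForm (by simpa using hb)⟩
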